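/- arXiv:2501.13885 — 2 statements merged into one kernel-verified Lean document; each statement's English description precedes it below -/
import Mathlib

section
/- Let A be a unital *-subalgebra of B(H) with CPTP factors R and J of the orthogonal conditional expectation onto A (so E|_A = J∘R, R∘J = id on Ǎ). Then for every Hermitian H₀ ∈ B(H), the superoperator ρ̌ ↦ R([H₀, J(ρ̌)]) equals ρ̌ ↦ [Ȟ, ρ̌] where Ȟ = J*(H₀), and Ȟ is Hermitian. -/
/-! STATEMENT 1: the reduced Hamiltonian superoperator. For the CPTP factors R, J of the
orthogonal conditional expectation onto a unital *-subalgebra (Wedderburn data V, W),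
for every Hermitian H₀, R([H₀, J(ρ̌)]) = [Ȟ, ρ̌] with Ȟ = J*(H₀), and Ȟ is Hermitian. -/

open Matrix
open scoped Kronecker BigOperators

noncomputable section

abbrev Mat (n : ℕ) : Type := Matrix (Fin n) (Fin n) ℂ

/-- Partial trace over the second tensor factor. -/
def ptrG {a b : ℕ} (M : Matrix (Fin a × Fin b) (Fin a × Fin b) ℂ) :
    Matrix (Fin a) (Fin a) ℂ :=
  Matrix.of fun i j => ∑ g : Fin b, M (i, g) (j, g)

variable {K n m : ℕ} {dF dG : Fin K → ℕ}

/-- The reduction map `R : B(H) → Ǎ`, `R(X) = ⊕ₖ tr_{G,k}(Vₖ* X Vₖ)`. -/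
def Rmap (V : ∀ k : Fin K, Matrix (Fin n) (Fin (dF k) × Fin (dG k)) ℂ)
    (W : ∀ k : Fin K, Matrix (Fin m) (Fin (dF k)) ℂ) (X : Mat n) : Mat m :=
  ∑ k : Fin K, W k * ptrG ((V k)ᴴ * X * V k) * (W k)ᴴ

/-- The injection map `J : Ǎ → B(H)`, `J(ρ̌) = ⊕ₖ ρ̌ₖ ⊗ 1_{G,k}/dim H_{G,k}`. -/
def Jmap (V : ∀ k : Fin K, Matrix (Fin n) (Fin (dF k) × Fin (dG k)) ℂ)
    (W : ∀ k : Fin K, Matrix (Fin m) (Fin (dF k)) ℂ) (ρ : Mat m) : Mat n :=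
  ∑ k : Fin K, V k *
    (((W k)ᴴ * ρ * W k) ⊗ₖ (((dG k : ℂ))⁻¹ • (1 : Matrix (Fin (dG k)) (Fin (dG k)) ℂ))) *
    (V k)ᴴ

/-- The Hilbert–Schmidt adjoint of `J`, `J*(X) = ⊕ₖ tr_{G,k}(Vₖ* X Vₖ)/dim H_{G,k}`. -/
def Jstar (V : ∀ k : Fin K, Matrix (Fin n) (Fin (dF k) × Fin (dG k)) ℂ)
    (W : ∀ k : Fin K, Matrix (Fin m) (Fin (dF k)) ℂ) (X : Mat n) : Mat m :=
  ∑ k : Fin K, ((dG k : ℂ))⁻¹ • (W k * ptrG ((V k)ᴴ * X * V k) * (W k)ᴴ)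

/-- Membership in the reduced algebra `Ǎ = ⊕ₖ B(H_{F,k})`: block-diagonal matrices. -/
def IsBlockDiag (W : ∀ k : Fin K, Matrix (Fin m) (Fin (dF k)) ℂ) (ρ : Mat m) : Prop :=
  ρ = ∑ k : Fin K, (W k * (W k)ᴴ) * ρ * (W k * (W k)ᴴ)

/-! Compressed by the orthogonal isometry `Vₖ`, `J(ρ̌)` becomes `ρ̌ₖ ⊗ 1/dim H_{G,k}` with
`ρ̌ₖ = Wₖ* ρ̌ Wₖ`, so block `k` of `R([H₀, J(ρ̌)])` is the partial trace of
`[Vₖ* H₀ Vₖ, ρ̌ₖ ⊗ 1]/dim H_{G,k}`. The partial trace over `G` commutes with multiplication by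
`ρ̌ₖ ⊗ 1`, which leaves `[tr_G(Vₖ* H₀ Vₖ), ρ̌ₖ]/dim H_{G,k}`; since `ρ̌` is block diagonal this
is also block `k` of `[J*(H₀), ρ̌]`. Hermiticity of `Ȟ` holds because `J*` commutes with `ᴴ`. -/

lemma ptrG_conjTranspose {a b : ℕ} (M : Matrix (Fin a × Fin b) (Fin a × Fin b) ℂ) :
    (ptrG M)ᴴ = ptrG Mᴴ := by
  ext i j
  simp [ptrG, conjTranspose_apply]

lemma ptrG_sub {a b : ℕ} (M N : Matrix (Fin a × Fin b) (Fin a × Fin b) ℂ) :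
    ptrG (M - N) = ptrG M - ptrG N := by
  ext i j
  simp [ptrG, Finset.sum_sub_distrib]

lemma ptrG_smul {a b : ℕ} (c : ℂ) (M : Matrix (Fin a × Fin b) (Fin a × Fin b) ℂ) :
    ptrG (c • M) = c • ptrG M := by
  ext i j
  simp [ptrG, Finset.mul_sum]

lemma ptrG_mul_kronecker_one {a b : ℕ} (M : Matrix (Fin a × Fin b) (Fin a × Fin b) ℂ)
    (A : Matrix (Fin a) (Fin a) ℂ) :
    ptrG (M * (A ⊗ₖ (1 : Matrix (Fin b) (Fin b) ℂ))) = ptrG M * A := by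
  ext i j
  simp only [ptrG, mul_apply, of_apply, kroneckerMap_apply, one_apply, Fintype.sum_prod_type,
    mul_ite, mul_one, mul_zero, Finset.sum_ite_eq', Finset.mem_univ, if_true, Finset.sum_mul]
  exact Finset.sum_comm

lemma ptrG_kronecker_one_mul {a b : ℕ} (M : Matrix (Fin a × Fin b) (Fin a × Fin b) ℂ)
    (A : Matrix (Fin a) (Fin a) ℂ) :
    ptrG ((A ⊗ₖ (1 : Matrix (Fin b) (Fin b) ℂ)) * M) = A * ptrG M := by
  ext i j
  simp only [ptrG, mul_apply, of_apply, kroneckerMap_apply, one_apply, Fintype.sum_prod_type,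
    mul_ite, mul_one, mul_zero, ite_mul, zero_mul, Finset.sum_ite_eq, Finset.mem_univ, if_true,
    Finset.mul_sum]
  exact Finset.sum_comm

section OrthogonalIsometries

variable {ι m R : Type*} [Fintype ι] [Fintype m] [Ring R] [StarRing R]
  {κ : ι → Type*} [∀ k, Fintype (κ k)] [∀ k, DecidableEq (κ k)]
  {V : ∀ k, Matrix m (κ k) R}

lemma sum_conj_mul_of_orthogonal (hortho : ∀ k, (V k)ᴴ * V k = 1)
    (hdisj : ∀ j k, j ≠ k → (V j)ᴴ * V k = 0) (X : ∀ k, Matrix (κ k) (κ k) R) (k : ι) :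
    (∑ j, V j * X j * (V j)ᴴ) * V k = V k * X k := by
  rw [Matrix.sum_mul, Finset.sum_eq_single k]
  · rw [Matrix.mul_assoc, hortho k, Matrix.mul_one]
  · intro j _ hjk
    rw [Matrix.mul_assoc, hdisj j k hjk, Matrix.mul_zero]
  · exact fun h => absurd (Finset.mem_univ k) h

lemma conjTranspose_mul_sum_conj_of_orthogonal (hortho : ∀ k, (V k)ᴴ * V k = 1)
    (hdisj : ∀ j k, j ≠ k → (V j)ᴴ * V k = 0) (X : ∀ k, Matrix (κ k) (κ k) R) (k : ι) :
    (V k)ᴴ * (∑ j, V j * X j * (V j)ᴴ) = X k * (V k)ᴴ := by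
  rw [Matrix.mul_sum, Finset.sum_eq_single k]
  · simp only [← Matrix.mul_assoc, hortho k, Matrix.one_mul]
  · intro j _ hjk
    simp only [← Matrix.mul_assoc, hdisj k j (Ne.symm hjk), Matrix.zero_mul]
  · exact fun h => absurd (Finset.mem_univ k) h

end OrthogonalIsometries

lemma ptrG_commutator_kronecker {a b : ℕ} (M : Matrix (Fin a × Fin b) (Fin a × Fin b) ℂ)
    (A : Matrix (Fin a) (Fin a) ℂ) (c : ℂ) :
    ptrG (M * (A ⊗ₖ (c • (1 : Matrix (Fin b) (Fin b) ℂ)))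
        - (A ⊗ₖ (c • (1 : Matrix (Fin b) (Fin b) ℂ))) * M) =
      c • (ptrG M * A - A * ptrG M) := by
  rw [kronecker_smul, Matrix.mul_smul, Matrix.smul_mul, ptrG_sub, ptrG_smul, ptrG_smul,
    ptrG_mul_kronecker_one, ptrG_kronecker_one_mul, smul_sub]

lemma IsBlockDiag.eq_sum_blocks {W : ∀ k : Fin K, Matrix (Fin m) (Fin (dF k)) ℂ} {ρ : Mat m}
    (hρ : IsBlockDiag W ρ) : ρ = ∑ k, W k * ((W k)ᴴ * ρ * W k) * (W k)ᴴ := by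
  conv_lhs => rw [hρ]
  simp only [Matrix.mul_assoc]

variable (V : ∀ k : Fin K, Matrix (Fin n) (Fin (dF k) × Fin (dG k)) ℂ)
  (W : ∀ k : Fin K, Matrix (Fin m) (Fin (dF k)) ℂ)

lemma Jstar_conjTranspose (X : Mat n) : (Jstar V W X)ᴴ = Jstar V W Xᴴ := by
  simp only [Jstar, conjTranspose_sum, conjTranspose_smul, conjTranspose_mul,
    conjTranspose_conjTranspose, ptrG_conjTranspose, star_inv₀, star_natCast, Matrix.mul_assoc]

lemma Rmap_commutator_Jmap (hVortho : ∀ k, (V k)ᴴ * V k = 1)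
    (hVdisj : ∀ j k, j ≠ k → (V j)ᴴ * V k = 0) (X : Mat n) (ρ : Mat m) :
    Rmap V W (X * Jmap V W ρ - Jmap V W ρ * X) =
      ∑ k, ((dG k : ℂ))⁻¹ • (W k * (ptrG ((V k)ᴴ * X * V k) * ((W k)ᴴ * ρ * W k)
        - ((W k)ᴴ * ρ * W k) * ptrG ((V k)ᴴ * X * V k)) * (W k)ᴴ) := by
  refine Finset.sum_congr rfl fun k _ => ?_
  have hJV := sum_conj_mul_of_orthogonal hVortho hVdisj
    (fun k => ((W k)ᴴ * ρ * W k) ⊗ₖ (((dG k : ℂ))⁻¹ • (1 : Matrix (Fin (dG k)) (Fin (dG k)) ℂ))) k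
  have hVJ := conjTranspose_mul_sum_conj_of_orthogonal hVortho hVdisj
    (fun k => ((W k)ᴴ * ρ * W k) ⊗ₖ (((dG k : ℂ))⁻¹ • (1 : Matrix (Fin (dG k)) (Fin (dG k)) ℂ))) k
  rw [← Jmap] at hJV hVJ
  have hblock : (V k)ᴴ * (X * Jmap V W ρ - Jmap V W ρ * X) * V k =
      (V k)ᴴ * X * V k * (((W k)ᴴ * ρ * W k) ⊗ₖ (((dG k : ℂ))⁻¹ • 1))
        - (((W k)ᴴ * ρ * W k) ⊗ₖ (((dG k : ℂ))⁻¹ • 1)) * ((V k)ᴴ * X * V k) := by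
    simp only [Matrix.mul_sub, Matrix.sub_mul, Matrix.mul_assoc, hJV]
    simp only [← Matrix.mul_assoc, hVJ]
  rw [hblock, ptrG_commutator_kronecker, Matrix.mul_smul, Matrix.smul_mul]

lemma Jstar_commutator_of_isBlockDiag (hWortho : ∀ k, (W k)ᴴ * W k = 1)
    (hWdisj : ∀ j k, j ≠ k → (W j)ᴴ * W k = 0) (X : Mat n) {ρ : Mat m}
    (hρ : IsBlockDiag W ρ) :
    Jstar V W X * ρ - ρ * Jstar V W X =
      ∑ k, ((dG k : ℂ))⁻¹ • (W k * (ptrG ((V k)ᴴ * X * V k) * ((W k)ᴴ * ρ * W k)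
        - ((W k)ᴴ * ρ * W k) * ptrG ((V k)ᴴ * X * V k)) * (W k)ᴴ) := by
  rw [Jstar, Matrix.sum_mul, Matrix.mul_sum, ← Finset.sum_sub_distrib]
  refine Finset.sum_congr rfl fun k _ => ?_
  have hρW := sum_conj_mul_of_orthogonal hWortho hWdisj (fun k => (W k)ᴴ * ρ * W k) k
  have hWρ := conjTranspose_mul_sum_conj_of_orthogonal hWortho hWdisj
    (fun k => (W k)ᴴ * ρ * W k) k
  rw [← hρ.eq_sum_blocks] at hρW hWρ
  generalize (W k)ᴴ * ρ * W k = A at hρW hWρ ⊢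
  rw [smul_mul_assoc, mul_smul_comm, ← smul_sub, Matrix.mul_sub, Matrix.sub_mul]
  simp only [Matrix.mul_assoc, hWρ]
  simp only [← Matrix.mul_assoc, hρW]

theorem reduced_hamiltonian_general
    (V : ∀ k : Fin K, Matrix (Fin n) (Fin (dF k) × Fin (dG k)) ℂ)
    (W : ∀ k : Fin K, Matrix (Fin m) (Fin (dF k)) ℂ)
    (hVortho : ∀ k, (V k)ᴴ * V k = 1)
    (hVdisj : ∀ j k, j ≠ k → (V j)ᴴ * V k = 0)
    (hWortho : ∀ k, (W k)ᴴ * W k = 1)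
    (hWdisj : ∀ j k, j ≠ k → (W j)ᴴ * W k = 0)
    (H₀ : Mat n) (hH : H₀ᴴ = H₀) :
    (Jstar V W H₀)ᴴ = Jstar V W H₀ ∧
    ∀ ρ : Mat m, IsBlockDiag W ρ →
      Rmap V W (H₀ * Jmap V W ρ - Jmap V W ρ * H₀) =
        Jstar V W H₀ * ρ - ρ * Jstar V W H₀ := by
  refine ⟨by rw [Jstar_conjTranspose, hH], fun ρ hρ => ?_⟩
  rw [Rmap_commutator_Jmap V W hVortho hVdisj,
    Jstar_commutator_of_isBlockDiag V W hWortho hWdisj H₀ hρ]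

theorem reduced_hamiltonian
    (V : ∀ k : Fin K, Matrix (Fin n) (Fin (dF k) × Fin (dG k)) ℂ)
    (W : ∀ k : Fin K, Matrix (Fin m) (Fin (dF k)) ℂ)
    (hVortho : ∀ k, (V k)ᴴ * V k = 1)
    (hVdisj : ∀ j k, j ≠ k → (V j)ᴴ * V k = 0)
    (hVcomplete : ∑ k : Fin K, V k * (V k)ᴴ = 1)
    (hWortho : ∀ k, (W k)ᴴ * W k = 1)
    (hWdisj : ∀ j k, j ≠ k → (W j)ᴴ * W k = 0)
    (hWcomplete : ∑ k : Fin K, W k * (W k)ᴴ = 1)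
    (hdG : ∀ k, 0 < dG k)
    (H₀ : Mat n) (hH : H₀ᴴ = H₀) :
    (Jstar V W H₀)ᴴ = Jstar V W H₀ ∧
    ∀ ρ : Mat m, IsBlockDiag W ρ →
      Rmap V W (H₀ * Jmap V W ρ - Jmap V W ρ * H₀) =
        Jstar V W H₀ * ρ - ρ * Jstar V W H₀ :=
  reduced_hamiltonian_general V W hVortho hVdisj hWortho hWdisj H₀ hH

end
end

section
/- Let A = alg*({σ_z^{(j)}}_{j=1}^N ∪ {σ_x^{(j)}σ_x^{(j+1)}}_{j=1}^{N−1}) ⊆ B((ℂ²)^{⊗N}) be the unital *-algebra generated by the listed operators. Then A equals the commutant of Q = Π_{j=1}^N σ_z^{(j)}, i.e. A = {X : XQ = QX}, and under conjugation by the unitary U_N of the spin-chain construction, U_N A U_N* = B(ℂ^{2^{N−1}}) ⊕ B(ℂ^{2^{N−1}}) (block-diagonal operators with respect to the splitting of the first qubit factor induced by σ_z). -/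
/-!
In the computational basis `σ_z^{(j)}` is the diagonal sign `(-1)^{v_j}` and
`σ_x^{(j)} σ_x^{(j+1)}` flips the bits `j, j+1`, so `Q` is the diagonal sign `(-1)^{|v|}` and every
generator preserves the parity `|v| mod 2`. Conversely, products of `(1 ± σ_z^{(j)})/2` give the
diagonal matrix units, chains of adjacent flips give the flip of any even set of bits, and
sandwiching a flip between two diagonal units gives every matrix unit `E_{vw}` with
`|v| ≡ |w|`; these span the commutant of `Q`.

`U_N` is the permutation matrix of `d(v) = (v₁ + v₂, …, v_{N-1} + v_N, v_N)`, so conjugation by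
`U_N` relabels matrix entries through `d`; since `|d(v)| ≡ v₁` by telescoping, it carries `Q` to
`σ_z^{(1)}`.
-/

open Matrix
open scoped Kronecker BigOperators Matrix

noncomputable section

/-- Matrices acting on the N-qubit Hilbert space (ℂ²)^{⊗N}. -/
abbrev QMat (N : ℕ) : Type := Matrix (Fin N → Fin 2) (Fin N → Fin 2) ℂ

def pauliX : Matrix (Fin 2) (Fin 2) ℂ := !![0, 1; 1, 0]
def pauliY : Matrix (Fin 2) (Fin 2) ℂ := !![0, -Complex.I; Complex.I, 0]
def pauliZ : Matrix (Fin 2) (Fin 2) ℂ := !![1, 0; 0, -1]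

/-- The local operator `σ_q^{(j)} = 1 ⊗ ⋯ ⊗ A ⊗ ⋯ ⊗ 1` acting on the j-th qubit. -/
def localOp (N : ℕ) (j : Fin N) (A : Matrix (Fin 2) (Fin 2) ℂ) : QMat N :=
  Matrix.of fun v w =>
    ∏ i : Fin N, if i = j then A (v i) (w i) else (if v i = w i then (1 : ℂ) else 0)

/-- The two-qubit permutation matrix
`P = ½(1₄ + σx⊗1₂ + 1₂⊗σz − σx⊗σz)`, i.e. the matrix with rows e₁, e₄, e₃, e₂. -/
def Pmat : Matrix (Fin 2 × Fin 2) (Fin 2 × Fin 2) ℂ :=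
  (2⁻¹ : ℂ) • ((1 : Matrix (Fin 2 × Fin 2) (Fin 2 × Fin 2) ℂ)
    + pauliX ⊗ₖ (1 : Matrix (Fin 2) (Fin 2) ℂ)
    + (1 : Matrix (Fin 2) (Fin 2) ℂ) ⊗ₖ pauliZ
    - pauliX ⊗ₖ pauliZ)

/-- The recursively defined unitaries: `U₁ = 1₂`, `U_N = (P ⊗ 1)(1₂ ⊗ U_{N−1})`. -/
def Umat : (N : ℕ) → QMat N
  | 0 => 1
  | 1 => 1
  | (N + 2) =>
      (Matrix.of fun v w =>
        Pmat (v 0, v 1) (w 0, w 1) *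
          ∏ i : Fin (N + 2), if 2 ≤ (i : ℕ) then (if v i = w i then (1 : ℂ) else 0) else 1) *
      (Matrix.of fun v w =>
        (if v 0 = w 0 then (1 : ℂ) else 0) *
          Umat (N + 1) (fun i => v i.succ) (fun i => w i.succ))

/-- The global parity operator `Q = σz^{(1)} ⋯ σz^{(N)}`. -/
def parityQ (N : ℕ) : QMat N :=
  ((List.finRange N).map fun j => localOp N j pauliZ).prod

/-- The generators `{σz^{(j)}}ⱼ ∪ {σx^{(j)}σx^{(j+1)}}ⱼ`. -/
def genSet (N : ℕ) : Set (QMat N) :=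
  (Set.range fun j : Fin N => localOp N j pauliZ) ∪
    {X | ∃ (j : Fin N) (h : (j : ℕ) + 1 < N),
      X = localOp N j pauliX * localOp N ⟨(j : ℕ) + 1, h⟩ pauliX}

theorem Matrix.mul_diagonal_eq_diagonal_mul_iff {n R : Type*} [Fintype n] [DecidableEq n]
    [CommSemiring R] [IsCancelMulZero R] (X : Matrix n n R) (d : n → R) :
    X * diagonal d = diagonal d * X ↔ ∀ i j, d i ≠ d j → X i j = 0 := by
  simp only [← Matrix.ext_iff, mul_diagonal, diagonal_mul, mul_comm (d _), mul_eq_mul_left_iff]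
  refine forall₂_congr fun i j => ?_
  rw [ne_comm, or_iff_not_imp_left]

theorem PEquiv.conjTranspose_toMatrix_toPEquiv {m n α : Type*} [DecidableEq m] [DecidableEq n]
    [NonAssocSemiring α] [StarRing α] (f : m ≃ n) :
    (f.toPEquiv.toMatrix : Matrix m n α)ᴴ = f.symm.toPEquiv.toMatrix := by
  ext i j
  simp [conjTranspose_apply, PEquiv.toMatrix_apply, apply_ite star, Equiv.eq_symm_apply, eq_comm]

theorem Pi.add_single_eq_update {ι M : Type*} [DecidableEq ι] [AddZeroClass M] (f : ι → M)
    (i : ι) (a : M) :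
    f + Pi.single i a = Function.update f i (f i + a) := by
  ext j
  rcases eq_or_ne j i with rfl | h <;> simp [*]

lemma fin_two_add_self (a : Fin 2) : a + a = 0 := by
  fin_cases a <;> rfl

lemma pi_fin_two_add_self {ι : Type*} (v : ι → Fin 2) : v + v = 0 :=
  funext fun i => fin_two_add_self (v i)

def signChar (a : Fin 2) : ℂ := if a = 0 then 1 else -1

lemma signChar_add (a b : Fin 2) : signChar (a + b) = signChar a * signChar b := by
  fin_cases a <;> fin_cases b <;> simp [signChar]

lemma signChar_sum {ι : Type*} (s : Finset ι) (f : ι → Fin 2) :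
    signChar (∑ i ∈ s, f i) = ∏ i ∈ s, signChar (f i) := by
  classical
  induction s using Finset.induction with
  | empty => rfl
  | insert i s hi ih => rw [Finset.sum_insert hi, Finset.prod_insert hi, signChar_add, ih]

lemma signChar_injective : Function.Injective signChar := by
  intro a b
  fin_cases a <;> fin_cases b <;> norm_num [signChar]

lemma star_signChar (a : Fin 2) : star (signChar a) = signChar a := by
  fin_cases a <;> simp [signChar]

lemma half_one_add_signChar_mul (a b : Fin 2) :
    (2⁻¹ : ℂ) * (1 + signChar a * signChar b) = if a = b then 1 else 0 := by
  fin_cases a <;> fin_cases b <;> norm_num [signChar]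

section

variable {N : ℕ}

lemma localOp_apply (j : Fin N) (A : Matrix (Fin 2) (Fin 2) ℂ) (v w : Fin N → Fin 2) :
    localOp N j A v w = A (v j) (w j) * if ∀ i ≠ j, v i = w i then 1 else 0 := by
  rw [localOp, of_apply, Fintype.prod_eq_mul_prod_compl j, if_pos rfl]
  congr 1
  rw [Finset.prod_congr rfl fun i hi => if_neg (by simpa using hi), Finset.prod_boole]
  simp only [Finset.mem_compl, Finset.mem_singleton]

lemma localOp_pauliZ (j : Fin N) : localOp N j pauliZ = diagonal fun v => signChar (v j) := by
  ext v w
  have hpauliZ (a b : Fin 2) : pauliZ a b = if a = b then signChar a else 0 := by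
    fin_cases a <;> fin_cases b <;> simp [pauliZ, signChar]
  rw [localOp_apply, hpauliZ, diagonal_apply, ite_mul, zero_mul, mul_ite, mul_one, mul_zero,
    ← ite_and]
  simp only [← Function.eq_update_iff, Function.update_eq_self]

def flipOp (N : ℕ) (s : Fin N → Fin 2) : QMat N :=
  of fun v w => if v = w + s then 1 else 0

lemma localOp_pauliX (j : Fin N) : localOp N j pauliX = flipOp N (Pi.single j 1) := by
  ext v w
  have hpauliX (a b : Fin 2) : pauliX a b = if a = b + 1 then 1 else 0 := by
    fin_cases a <;> fin_cases b <;> simp [pauliX]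
  rw [localOp_apply, hpauliX, flipOp, of_apply, ite_mul, one_mul, zero_mul, ← ite_and,
    Pi.add_single_eq_update]
  simp only [Function.eq_update_iff]

variable (N) in
lemma flipOp_zero : flipOp N 0 = 1 := by
  ext v w
  simp [flipOp, one_apply]

lemma flipOp_add (s t : Fin N → Fin 2) : flipOp N (s + t) = flipOp N s * flipOp N t := by
  ext v w
  simp [flipOp, mul_apply, add_comm s t, add_assoc]

variable (N) in
lemma parityQ_eq : parityQ N = diagonal fun v => signChar (∑ i, v i) := by
  simp_rw [signChar_sum, parityQ, localOp_pauliZ]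
  rw [← Finset.prod_fn, Fin.prod_univ_def]
  have h := map_list_prod (diagonalRingHom (Fin N → Fin 2) ℂ)
    ((List.finRange N).map fun j v => signChar (v j))
  rw [List.map_map] at h
  exact h.symm

variable (N) in
lemma isSelfAdjoint_parityQ : IsSelfAdjoint (parityQ N) := by
  rw [IsSelfAdjoint, parityQ_eq, star_eq_conjTranspose, diagonal_conjTranspose]
  simp only [Pi.star_def, star_signChar]

lemma commute_parityQ_iff (X : QMat N) :
    X * parityQ N = parityQ N * X ↔ ∀ v w, ∑ i, v i ≠ ∑ i, w i → X v w = 0 := by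
  simp only [parityQ_eq, mul_diagonal_eq_diagonal_mul_iff, signChar_injective.ne_iff]

lemma flipOp_commute_parityQ (s : Fin N → Fin 2) (hs : ∑ i, s i = 0) :
    flipOp N s * parityQ N = parityQ N * flipOp N s := by
  rw [commute_parityQ_iff]
  intro v w hvw
  rw [flipOp, of_apply, if_neg]
  rintro rfl
  simp [Finset.sum_add_distrib, hs] at hvw

variable (N) in
lemma adjoin_genSet_le_centralizer :
    StarAlgebra.adjoin ℂ (genSet N) ≤ StarSubalgebra.centralizer ℂ {parityQ N} := by
  refine StarAlgebra.adjoin_le fun G hG => (StarSubalgebra.mem_centralizer_iff ℂ).mpr ?_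
  simp only [Set.mem_singleton_iff, forall_eq, (isSelfAdjoint_parityQ N).star_eq, and_self]
  rcases hG with ⟨j, rfl⟩ | ⟨j, h, rfl⟩
  · dsimp only
    rw [parityQ_eq, localOp_pauliZ]
    exact commute_diagonal _ _
  · rw [localOp_pauliX, localOp_pauliX, ← flipOp_add]
    exact (flipOp_commute_parityQ _ (by simp [Finset.sum_add_distrib])).symm

lemma flipOp_adjacent_mem {n : ℕ} (i : Fin n) :
    flipOp (n + 1) (Pi.single i.castSucc 1 + Pi.single i.succ 1) ∈
      StarAlgebra.adjoin ℂ (genSet (n + 1)) := by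
  rw [flipOp_add, ← localOp_pauliX, ← localOp_pauliX]
  exact StarAlgebra.subset_adjoin ℂ _ (Or.inr ⟨i.castSucc, by simp, rfl⟩)

lemma flipOp_single_add_single_zero_mem {n : ℕ} (i : Fin (n + 1)) :
    flipOp (n + 1) (Pi.single i 1 + Pi.single 0 1) ∈ StarAlgebra.adjoin ℂ (genSet (n + 1)) := by
  induction i using Fin.induction with
  | zero =>
    rw [pi_fin_two_add_self, flipOp_zero]
    exact one_mem _
  | succ i ih =>
    have hchain : (Pi.single i.succ 1 + Pi.single 0 1 : Fin (n + 1) → Fin 2) =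
        (Pi.single i.castSucc 1 + Pi.single i.succ 1) +
          (Pi.single i.castSucc 1 + Pi.single 0 1) := by
      rw [add_add_add_comm, pi_fin_two_add_self, zero_add]
    rw [hchain, flipOp_add]
    exact mul_mem (flipOp_adjacent_mem i) ih

lemma flipOp_mem_of_sum_eq_zero (s : Fin N → Fin 2) (hs : ∑ i, s i = 0) :
    flipOp N s ∈ StarAlgebra.adjoin ℂ (genSet N) := by
  obtain _ | n := N
  · rw [Subsingleton.elim s 0, flipOp_zero]
    exact one_mem _
  have hdecomp : s = ∑ i, (Pi.single i (s i) + Pi.single 0 (s i)) := by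
    have h := map_sum (AddMonoidHom.single (fun _ => Fin 2) (0 : Fin (n + 1))) s Finset.univ
    simp only [AddMonoidHom.single_apply, hs, Pi.single_zero] at h
    rw [Finset.sum_add_distrib, Finset.univ_sum_single, ← h, add_zero]
  rw [hdecomp]
  refine Finset.sum_induction _
    (fun t => flipOp (n + 1) t ∈ StarAlgebra.adjoin ℂ (genSet (n + 1)))
    (fun a b ha hb => (flipOp_add a b).symm ▸ mul_mem ha hb)
    (by rw [flipOp_zero]; exact one_mem _) fun i _ => ?_
  obtain h | h : s i = 0 ∨ s i = 1 := by generalize s i = a; fin_cases a <;> simp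
  · simpa only [h, Pi.single_zero, add_zero, flipOp_zero] using one_mem _
  · simpa only [h] using flipOp_single_add_single_zero_mem i

lemma single_self_mem (v : Fin N → Fin 2) :
    single v v (1 : ℂ) ∈ StarAlgebra.adjoin ℂ (genSet N) := by
  -- Work in the commutative algebra of diagonals, where `Subalgebra.prod_mem` applies.
  let B := (StarAlgebra.adjoin ℂ (genSet N)).toSubalgebra.comap (diagonalAlgHom ℂ)
  have hsign (j : Fin N) : (fun w : Fin N → Fin 2 => signChar (w j)) ∈ B := by
    show diagonal (fun w : Fin N → Fin 2 => signChar (w j)) ∈ StarAlgebra.adjoin ℂ (genSet N)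
    rw [← localOp_pauliZ]
    exact StarAlgebra.subset_adjoin ℂ _ (Or.inl ⟨j, rfl⟩)
  have hproj : Pi.single v 1 =
      ∏ j, (2⁻¹ : ℂ) • (1 + signChar (v j) • fun w : Fin N → Fin 2 => signChar (w j)) := by
    ext w
    simp only [Finset.prod_apply, Pi.smul_apply, Pi.add_apply, Pi.one_apply, smul_eq_mul,
      half_one_add_signChar_mul, Fintype.prod_boole, Pi.single_apply, funext_iff, eq_comm]
    congr
  rw [← diagonal_single, hproj]
  exact Subalgebra.prod_mem _ fun j _ =>
    Subalgebra.smul_mem _ (add_mem (one_mem _) (Subalgebra.smul_mem _ (hsign j) _)) _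

lemma single_mem_of_sum_eq (v w : Fin N → Fin 2) (h : ∑ i, v i = ∑ i, w i) :
    single v w (1 : ℂ) ∈ StarAlgebra.adjoin ℂ (genSet N) := by
  have hflip : flipOp N (v - w) v w = 1 := by simp [flipOp]
  have hsum : ∑ i, (v - w) i = 0 := by simp [Finset.sum_sub_distrib, h]
  rw [← hflip, ← one_mul (flipOp N (v - w) v w), ← mul_one (1 * _), ← single_mul_mul_single]
  exact mul_mem (mul_mem (single_self_mem v) (flipOp_mem_of_sum_eq_zero _ hsum))
    (single_self_mem w)

lemma mem_adjoin_genSet_of_commute {X : QMat N} (hX : X * parityQ N = parityQ N * X) :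
    X ∈ StarAlgebra.adjoin ℂ (genSet N) := by
  rw [commute_parityQ_iff] at hX
  rw [matrix_eq_sum_single X]
  refine sum_mem fun v _ => sum_mem fun w _ => ?_
  by_cases h : ∑ i, v i = ∑ i, w i
  · rw [← mul_one (X v w), ← smul_eq_mul, ← smul_single]
    exact SMulMemClass.smul_mem _ (single_mem_of_sum_eq v w h)
  · rw [hX v w h, single_zero]
    exact zero_mem _

lemma mem_adjoin_genSet_iff (X : QMat N) :
    X ∈ StarAlgebra.adjoin ℂ (genSet N) ↔ X * parityQ N = parityQ N * X :=
  ⟨fun hX => ((StarSubalgebra.mem_centralizer_iff ℂ).mp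
    (adjoin_genSet_le_centralizer N hX) _ rfl).1.symm, mem_adjoin_genSet_of_commute⟩

end

def diffMap : (N : ℕ) → (Fin N → Fin 2) → Fin N → Fin 2
  | 0, v => v
  | 1, v => v
  | N + 2, v => Fin.cons (v 0 + v 1) (diffMap (N + 1) (Fin.tail v))

lemma diffMap_injective : ∀ N, Function.Injective (diffMap N)
  | 0 => Function.injective_id
  | 1 => Function.injective_id
  | N + 2 => fun a b h => by
    rw [diffMap, diffMap, Fin.cons_inj] at h
    have htail := diffMap_injective (N + 1) h.2
    have h1 : a 1 = b 1 := congrFun htail 0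
    have h0 : a 0 = b 0 := add_right_cancel (h1 ▸ h.1)
    rw [← Fin.cons_self_tail a, ← Fin.cons_self_tail b, h0, htail]

lemma sum_diffMap : ∀ (N : ℕ) (v : Fin (N + 1) → Fin 2), ∑ i, diffMap (N + 1) v i = v 0
  | 0, v => by simp [diffMap]
  | N + 1, v => by
    rw [diffMap, Fin.sum_cons, sum_diffMap N, add_assoc, Fin.tail, Fin.succ_zero_eq_one,
      fin_two_add_self, add_zero]

def diffEquiv (N : ℕ) : (Fin N → Fin 2) ≃ (Fin N → Fin 2) :=
  Equiv.ofBijective (diffMap N) (Finite.injective_iff_bijective.mp (diffMap_injective N))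

lemma Pmat_apply (a b c d : Fin 2) :
    Pmat (a, b) (c, d) = if a = c + b ∧ b = d then 1 else 0 := by
  fin_cases a <;> fin_cases b <;> fin_cases c <;> fin_cases d <;>
    simp [Pmat, pauliX, pauliZ, one_apply] <;> norm_num

lemma Umat_apply : ∀ (N : ℕ) (v w : Fin N → Fin 2),
    Umat N v w = if diffMap N v = w then 1 else 0
  | 0, v, w => by rw [Umat, diffMap, one_apply]
  | 1, v, w => by rw [Umat, diffMap, one_apply]
  | N + 2, v, w => by
    set u₀ : Fin (N + 2) → Fin 2 := Fin.cons (v 0 + v 1) (Fin.tail v)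
    have hfirst (u : Fin (N + 2) → Fin 2) :
        Pmat (v 0, v 1) (u 0, u 1) *
          (∏ i : Fin (N + 2), if 2 ≤ (i : ℕ) then (if v i = u i then (1 : ℂ) else 0) else 1) =
        if u = u₀ then 1 else 0 := by
      have hprod : (∏ i : Fin (N + 2),
          if 2 ≤ (i : ℕ) then (if v i = u i then (1 : ℂ) else 0) else 1) =
          if ∀ i : Fin N, v i.succ.succ = u i.succ.succ then 1 else 0 := by
        simp [Fin.prod_univ_succ, Fintype.prod_boole]
      have hswap : ∀ a b c : Fin 2, a = b + c ↔ b = a + c := by decide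
      rw [Pmat_apply, hprod, boole_mul, ← ite_and]
      refine if_congr ?_ rfl rfl
      rw [funext_iff, Fin.forall_fin_succ, Fin.forall_fin_succ]
      simp only [u₀, Fin.cons_zero, Fin.cons_one, Fin.cons_succ, Fin.tail, Fin.succ_zero_eq_one,
        and_assoc]
      rw [hswap]
      simp only [eq_comm]
    simp only [Umat, mul_apply, of_apply, hfirst, ite_mul, one_mul, zero_mul,
      Finset.sum_ite_eq', Finset.mem_univ, if_true]
    rw [Umat_apply (N + 1), ← ite_and]
    refine if_congr ?_ rfl rfl
    conv_rhs => rw [diffMap, ← Fin.cons_self_tail w, Fin.cons_inj]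
    rfl

lemma Umat_eq_toMatrix (N : ℕ) : Umat N = (diffEquiv N).toPEquiv.toMatrix := by
  ext v w
  simp [Umat_apply, PEquiv.toMatrix_apply, diffEquiv, eq_comm]

lemma Umat_mul_mul_conjTranspose {N : ℕ} (X : QMat N) :
    Umat N * X * (Umat N)ᴴ = X.submatrix (diffMap N) (diffMap N) := by
  rw [Umat_eq_toMatrix, PEquiv.conjTranspose_toMatrix_toPEquiv, PEquiv.toMatrix_toPEquiv_mul,
    PEquiv.mul_toMatrix_toPEquiv, submatrix_submatrix]
  rfl

theorem spin_chain_algebra_commutant (N : ℕ) (hN : 0 < N) :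
    ((StarAlgebra.adjoin ℂ (genSet N) : StarSubalgebra ℂ (QMat N)) : Set (QMat N)) =
      {X : QMat N | X * parityQ N = parityQ N * X} ∧
    (∀ X : QMat N, X ∈ StarAlgebra.adjoin ℂ (genSet N) ↔
      (Umat N * X * (Umat N)ᴴ) * localOp N ⟨0, hN⟩ pauliZ =
        localOp N ⟨0, hN⟩ pauliZ * (Umat N * X * (Umat N)ᴴ)) := by
  refine ⟨Set.ext mem_adjoin_genSet_iff, fun X => ?_⟩
  obtain ⟨n, rfl⟩ := Nat.exists_eq_succ_of_ne_zero hN.ne'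
  rw [mem_adjoin_genSet_iff, commute_parityQ_iff, Umat_mul_mul_conjTranspose, localOp_pauliZ,
    mul_diagonal_eq_diagonal_mul_iff, (diffEquiv (n + 1)).surjective.forall₂]
  simp only [diffEquiv, Equiv.ofBijective_apply, sum_diffMap, submatrix_apply,
    signChar_injective.ne_iff]
  rfl

end
end
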